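/- For partition λ = (λ_1,…,λ_n), the polynomial (B_n^+)^{λ_n}(B_{n-1}^+)^{λ_{n-1}-λ_n}⋯(B_1^+)^{λ_1-λ_2}·1 is a symmetric and homogeneous polynomial of degree |λ| = λ_1 + ⋯ + λ_n in x_1,…,x_n. -/

import Mathlib

open MvPolynomial

noncomputable section Jack

/-- The field `ℚ(α)` of rational functions in the Jack parameter `α`. -/
abbrev FF : Type := RatFunc ℚ

/-- The Jack parameter `α`, a transcendental element of `ℚ(α)`. -/
abbrev alpha : FF := RatFunc.X

/-- Polynomials in `x_1, …, x_n` over `ℚ(α)`. -/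
abbrev R (n : ℕ) : Type := MvPolynomial (Fin n) FF

variable {n : ℕ}

/-- The exchange operator `K_{ij}` permuting the variables `x_i` and `x_j`. -/
def Kex (i j : Fin n) (p : R n) : R n := rename (Equiv.swap i j) p

lemma kex_dvd (i j : Fin n) (p : R n) : (X i - X j : R n) ∣ (p - Kex i j p) := by
  unfold Kex
  induction p using MvPolynomial.induction_on with
  | C a => simp
  | add p q hp hq =>
      have h := dvd_add hp hq
      rw [map_add]
      convert h using 1
      ring
  | mul_X p k hp =>
      rw [map_mul, rename_X]
      have key : p * X k - rename (Equiv.swap i j) p * X (Equiv.swap i j k)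
          = (p - rename (Equiv.swap i j) p) * X k
            + rename (Equiv.swap i j) p * (X k - X (Equiv.swap i j k)) := by ring
      rw [key]
      refine dvd_add (hp.mul_right _) ?_
      rcases eq_or_ne k i with rfl | hki
      · rw [Equiv.swap_apply_left]
        exact Dvd.intro_left _ rfl
      rcases eq_or_ne k j with rfl | hkj
      · rw [Equiv.swap_apply_right]
        refine dvd_mul_of_dvd_right ?_ _
        exact dvd_sub_comm.mp dvd_rfl
      · rw [Equiv.swap_apply_of_ne_of_ne hki hkj]
        simp

/-- The divided difference `(p - K_{ij} p)/(x_i - x_j)`, a polynomial. -/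
def dd (i j : Fin n) (p : R n) : R n := (kex_dvd i j p).choose

lemma dd_spec (i j : Fin n) (p : R n) :
    p - Kex i j p = (X i - X j) * dd i j p := (kex_dvd i j p).choose_spec

/-- The Dunkl--Cherednik operator
`D_i = α x_i ∂/∂x_i + Σ_{j ≠ i} (x_i/(x_i - x_j))(1 - K_{ij})`. -/
def D (i : Fin n) (p : R n) : R n :=
  C alpha * (X i * pderiv i p) + ∑ j ∈ Finset.univ.erase i, X i * dd i j p

/-- The shifted operator `D_i + m`. -/
def Dm (i : Fin n) (m : ℤ) (p : R n) : R n := D i p + m • p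

/-- `(D_{j_1}+m)(D_{j_2}+m+1)⋯` along a list of indices, applied to `p`. -/
def DJl : List (Fin n) → ℤ → R n → R n
  | [], _, p => p
  | j :: t, m, p => Dm j m (DJl t (m + 1) p)

/-- `D_J = (D_{j_1}+1)(D_{j_2}+2)⋯(D_{j_ℓ}+ℓ)` for `J = {j_1 < … < j_ℓ}`. -/
def DJ (J : Finset (Fin n)) (p : R n) : R n := DJl (J.sort (· ≤ ·)) 1 p

/-- The creation operator `B_i^+ = Σ_{|J| = i} x_J D_J`. -/
def Bop (i : ℕ) (p : R n) : R n :=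
  ∑ J ∈ Finset.univ.powersetCard i, (∏ k ∈ J, X k) * DJ J p

/-- The canonical image of `ℤ[α]` in `ℚ(α)`. -/
def toFF (q : Polynomial ℤ) : FF :=
  algebraMap (Polynomial ℚ) FF (q.map (Int.castRingHom ℚ))

/-- A scalar in `ℚ(α)` is a polynomial in `α` with integer coefficients. -/
def IntAlpha (c : FF) : Prop := ∃ q : Polynomial ℤ, c = toFF q

/-- `p` is symmetric in the variables indexed by `J`. -/
def SymmIn (J : Finset (Fin n)) (p : R n) : Prop :=
  ∀ i ∈ J, ∀ j ∈ J, Kex i j p = p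

/-- The monomial symmetric polynomial `m_μ`, the sum of `x^ν` over the distinct
permutations `ν` of the exponent vector `μ`. -/
def msymmF (μ : Fin n → ℕ) : R n :=
  ∑ ν ∈ Finset.image
      (fun σ : Equiv.Perm (Fin n) => Finsupp.equivFunOnFinite.symm (μ ∘ σ))
      Finset.univ,
    monomial ν 1

/-- The power-sum product `p_λ = p_{λ_1} p_{λ_2} ⋯` over the nonzero parts of `λ`. -/
def pprod (lam : Fin n → ℕ) : R n :=
  ∏ i ∈ Finset.univ.filter (fun i => lam i ≠ 0), psum (Fin n) FF (lam i)

/-- The number of (nonzero) parts `ℓ(λ)`. -/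
def plen (lam : Fin n → ℕ) : ℕ := (Finset.univ.filter fun i => lam i ≠ 0).card

/-- `z_λ = ∏_i i^{m_i(λ)} m_i(λ)!`. -/
def zed (lam : Fin n → ℕ) : ℕ :=
  ∏ i ∈ Finset.Icc 1 (∑ j, lam j),
    i ^ ((Finset.univ.filter fun j => lam j = i).card)
      * Nat.factorial ((Finset.univ.filter fun j => lam j = i).card)

/-- Dominance order: `μ ≤ λ` (same total degree). -/
def Dominates (μ lam : Fin n → ℕ) : Prop :=
  (∑ i, μ i = ∑ i, lam i) ∧
    ∀ k : Fin n, ∑ i ∈ Finset.univ.filter (· ≤ k), μ i ≤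
      ∑ i ∈ Finset.univ.filter (· ≤ k), lam i

/-- Iterated Rodrigues construction: `rodA lam i = (B_i^+)^{λ_i-λ_{i+1}} ⋯ (B_1^+)^{λ_1-λ_2}·1`,
where `lam k` denotes `λ_k` (1-indexed). -/
def rodA (lam : ℕ → ℕ) : ℕ → R n
  | 0 => 1
  | i + 1 => (Bop (i + 1))^[lam (i + 1) - lam (i + 2)] (rodA lam i)

/-- `(B_n^+)^{λ_n}(B_{n-1}^+)^{λ_{n-1}-λ_n} ⋯ (B_1^+)^{λ_1-λ_2}·1`. -/
def rod (lam : ℕ → ℕ) : R n := rodA lam n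

/-- The field of rational functions in `x_1,…,x_n` over `ℚ(α)`. -/
abbrev KF (n : ℕ) : Type := FractionRing (R n)

/-- The embedding of polynomials into rational functions. -/
def toK : R n →+* KF n := algebraMap (R n) (KF n)

/-- The Sutherland operator
`H(α) = α Σ_j (x_j ∂_j)^2 + Σ_{j<k} ((x_j+x_k)/(x_j-x_k))(x_j ∂_j − x_k ∂_k)`,
applied to a polynomial, with values in the field of rational functions. -/
def Hop (p : R n) : KF n :=
  toK (C alpha * ∑ j, X j * pderiv j (X j * pderiv j p))
    + ∑ jk ∈ (Finset.univ : Finset (Fin n × Fin n)).filter (fun jk => jk.1 < jk.2),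
        (toK (X jk.1 + X jk.2) / toK (X jk.1 - X jk.2))
          * toK (X jk.1 * pderiv jk.1 p - X jk.2 * pderiv jk.2 p)


/-!
Split `D_i = α E_i + Σ_{k ≠ i} x_i ∂_{ik}` into the Euler operator `E_i = x_i ∂/∂x_i` and the
divided differences `∂_{ik} = (1 - K_{ik})/(x_i - x_k)`. Comparing coefficients of `α`, one checks
that `D_i D_j + D_i = D_j D_i + D_j` on polynomials symmetric in `x_i, x_j`, i.e.
`(D_i + m)(D_j + m + 1) = (D_j + m)(D_i + m + 1)` there. Hence on a symmetric polynomial the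
product `D_J` does not depend on the order of its factors, a permutation `σ` maps `x_J D_J p` to
`x_{σJ} D_{σJ} p`, and `B_i^+` preserves symmetry. Each `D_i` preserves homogeneity and `x_J` has
degree `|J|`, so `B_i^+` raises the degree by `i`; summing by parts gives `|λ|`.
-/

namespace MvPolynomial

variable {σ R : Type*}

lemma pderiv_pderiv_comm [CommRing R] (i j : σ) (p : MvPolynomial σ R) :
    pderiv i (pderiv j p) = pderiv j (pderiv i p) := by
  classical
  have h : ⁅pderiv i, pderiv j⁆ = (0 : Derivation R (MvPolynomial σ R) (MvPolynomial σ R)) :=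
    derivation_ext fun k => by
      rw [Derivation.commutator_apply]; simp [pderiv_X, Pi.single_apply, apply_ite]
  have := congr($h p)
  rwa [Derivation.commutator_apply, Derivation.zero_apply, sub_eq_zero] at this

attribute [local instance] gradedAlgebra in
lemma homogeneousComponent_mul_of_isHomogeneous_left [CommSemiring R]
    {a : MvPolynomial σ R} {m : ℕ} (ha : a.IsHomogeneous m) (q : MvPolynomial σ R) (e : ℕ) :
    homogeneousComponent (m + e) (a * q) = a * homogeneousComponent e q := by
  have := DirectSum.coe_decompose_mul_add_of_left_mem (homogeneousSubmodule σ R) (j := e) (b := q)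
    ((mem_homogeneousSubmodule _ _).mpr ha)
  rwa [← decomposition.decompose'_apply, ← decomposition.decompose'_apply]

lemma IsHomogeneous.of_mul_left [CommRing R] [IsDomain R] {a q : MvPolynomial σ R} {m d : ℕ}
    (ha : a.IsHomogeneous m) (ha0 : a ≠ 0) (h : (a * q).IsHomogeneous (m + d)) :
    q.IsHomogeneous d := by
  intro x hx
  suffices x.degree = d by rwa [Finsupp.degree_eq_weight_one] at this
  by_contra hne
  have hcomp : homogeneousComponent x.degree q = 0 := by
    have := homogeneousComponent_mul_of_isHomogeneous_left ha q x.degree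
    rw [homogeneousComponent_of_mem ((mem_homogeneousSubmodule _ _).mpr h),
      if_neg (by omega)] at this
    exact (mul_eq_zero.mp this.symm).resolve_left ha0
  apply hx
  simpa [coeff_homogeneousComponent, Finsupp.degree_eq_weight_one] using congr(coeff x $hcomp)

lemma IsHomogeneous.eq_C_of_zero [CommSemiring R] {p : MvPolynomial σ R}
    (hp : p.IsHomogeneous 0) : p = C (coeff 0 p) :=
  totalDegree_eq_zero_iff_eq_C.mp ((totalDegree_zero_iff_isHomogeneous _).mpr hp)

end MvPolynomial

lemma Finset.mem_univ_erase_erase {α : Type*} [Fintype α] [DecidableEq α] {a b c : α} :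
    c ∈ (univ.erase a).erase b ↔ c ≠ b ∧ c ≠ a := by
  simp

lemma Nat.sum_range_succ_mul_sub_add {f : ℕ → ℕ} (hf : ∀ t, f (t + 1) ≤ f t) (m : ℕ) :
    ∑ t ∈ Finset.range m, (t + 1) * (f t - f (t + 1)) + m * f m = ∑ t ∈ Finset.range m, f t := by
  induction m with
  | zero => simp
  | succ m ih =>
    rw [Finset.sum_range_succ, Finset.sum_range_succ, ← ih, add_assoc, ← Nat.mul_add,
      Nat.sub_add_cancel (hf m)]
    ring

noncomputable section

open Finset

variable {n : ℕ}

lemma Kex_comm (i j : Fin n) (p : R n) : Kex j i p = Kex i j p := by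
  rw [Kex, Equiv.swap_comm, Kex]

lemma Kex_mul (i j : Fin n) (p q : R n) : Kex i j (p * q) = Kex i j p * Kex i j q :=
  map_mul _ p q

lemma Kex_X_of_ne {i j k : Fin n} (hki : k ≠ i) (hkj : k ≠ j) : Kex i j (X k : R n) = X k := by
  rw [Kex, rename_X, Equiv.swap_apply_of_ne_of_ne hki hkj]

lemma Kex_Kex_self (i j : Fin n) (p : R n) : Kex i j (Kex i j p) = p := by
  rw [Kex, Kex, rename_rename, ← Equiv.Perm.coe_mul, Equiv.swap_mul_self, Equiv.Perm.coe_one,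
    rename_id_apply]

lemma rename_Kex (σ : Equiv.Perm (Fin n)) (i j : Fin n) (p : R n) :
    rename σ (Kex i j p) = Kex (σ i) (σ j) (rename σ p) := by
  simp only [Kex, rename_rename, ← Equiv.Perm.coe_mul, Equiv.mul_swap_eq_swap_mul]

lemma Kex_Kex (a b i j : Fin n) (p : R n) :
    Kex a b (Kex i j p) = Kex (Equiv.swap a b i) (Equiv.swap a b j) (Kex a b p) :=
  rename_Kex _ i j p

lemma X_sub_X_ne_zero {i j : Fin n} (hij : i ≠ j) : (X i - X j : R n) ≠ 0 :=
  sub_ne_zero.mpr fun h => hij (X_injective h)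

lemma eq_dd_of_mul_eq {i j : Fin n} (hij : i ≠ j) {p q : R n}
    (h : (X i - X j) * q = p - Kex i j p) : q = dd i j p :=
  mul_left_cancel₀ (X_sub_X_ne_zero hij) (by rw [h, dd_spec])

section DividedDifference

variable {i j : Fin n}

lemma dd_add (hij : i ≠ j) (p q : R n) : dd i j (p + q) = dd i j p + dd i j q := by
  refine (eq_dd_of_mul_eq hij ?_).symm
  rw [mul_add, ← dd_spec, ← dd_spec, Kex, Kex, Kex, map_add]
  ring

lemma dd_C_mul (hij : i ≠ j) (c : FF) (p : R n) : dd i j (C c * p) = C c * dd i j p := by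
  refine (eq_dd_of_mul_eq hij ?_).symm
  rw [mul_left_comm, ← dd_spec, Kex, Kex, map_mul, rename_C]
  ring

lemma dd_eq_zero_of_Kex_eq (hij : i ≠ j) {p : R n} (hp : Kex i j p = p) : dd i j p = 0 :=
  (eq_dd_of_mul_eq hij (by rw [hp, sub_self, mul_zero])).symm

lemma dd_zero (hij : i ≠ j) : dd i j (0 : R n) = 0 :=
  dd_eq_zero_of_Kex_eq hij (map_zero _)

lemma dd_swap (hij : i ≠ j) (p : R n) : dd j i p = -dd i j p := by
  refine (eq_dd_of_mul_eq hij.symm ?_).symm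
  rw [Kex_comm, ← sub_eq_zero, ← neg_sub_neg, dd_spec]
  ring

lemma dd_mul (hij : i ≠ j) (f g : R n) :
    dd i j (f * g) = f * dd i j g + dd i j f * Kex i j g := by
  refine (eq_dd_of_mul_eq hij ?_).symm
  rw [Kex_mul]
  linear_combination -f * dd_spec i j g - Kex i j g * dd_spec i j f

lemma dd_mul_of_Kex_eq (hij : i ≠ j) {f : R n} (hf : Kex i j f = f) (g : R n) :
    dd i j (f * g) = f * dd i j g := by
  rw [dd_mul hij, dd_eq_zero_of_Kex_eq hij hf, zero_mul, add_zero]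

lemma rename_dd (σ : Equiv.Perm (Fin n)) (hij : i ≠ j) (p : R n) :
    rename σ (dd i j p) = dd (σ i) (σ j) (rename σ p) := by
  refine eq_dd_of_mul_eq (σ.injective.ne hij) ?_
  simpa [rename_Kex] using congr(rename σ $(dd_spec i j p)).symm

lemma Kex_dd (a b : Fin n) (hij : i ≠ j) (p : R n) :
    Kex a b (dd i j p) = dd (Equiv.swap a b i) (Equiv.swap a b j) (Kex a b p) :=
  rename_dd _ hij p

lemma dd_Kex_self (hij : i ≠ j) (p : R n) : dd i j (Kex i j p) = -dd i j p := by
  refine (eq_dd_of_mul_eq hij ?_).symm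
  rw [Kex_Kex_self]
  linear_combination dd_spec i j p

lemma pderiv_Kex {l : Fin n} (hli : l ≠ i) (hlj : l ≠ j) (p : R n) :
    pderiv l (Kex i j p) = Kex i j (pderiv l p) := by
  have := pderiv_rename (Equiv.swap i j).injective l p
  rwa [Equiv.swap_apply_of_ne_of_ne hli hlj] at this

lemma pderiv_dd (hij : i ≠ j) {l : Fin n} (hli : l ≠ i) (hlj : l ≠ j) (p : R n) :
    pderiv l (dd i j p) = dd i j (pderiv l p) := by
  refine eq_dd_of_mul_eq hij ?_
  have h := congr(pderiv l $(dd_spec i j p))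
  rw [Derivation.leibniz, map_sub, pderiv_Kex hli hlj] at h
  simpa [pderiv_X_of_ne hli.symm, pderiv_X_of_ne hlj.symm] using h.symm

lemma dd_dd_comm {k l : Fin n} (hik : i ≠ k) (hjl : j ≠ l) (hij : i ≠ j) (hil : i ≠ l)
    (hkj : k ≠ j) (hkl : k ≠ l) (p : R n) : dd i k (dd j l p) = dd j l (dd i k p) := by
  refine mul_left_cancel₀ (mul_ne_zero (X_sub_X_ne_zero hik) (X_sub_X_ne_zero hjl)) ?_
  have e1 := dd_spec i k (dd j l p)
  have e2 := dd_spec j l (dd i k p)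
  rw [Kex_dd _ _ hjl, Equiv.swap_apply_of_ne_of_ne hij.symm hkj.symm,
    Equiv.swap_apply_of_ne_of_ne hil.symm hkl.symm] at e1
  rw [Kex_dd _ _ hik, Equiv.swap_apply_of_ne_of_ne hij hil,
    Equiv.swap_apply_of_ne_of_ne hkj hkl] at e2
  have hK : Kex i k (Kex j l p) = Kex j l (Kex i k p) := by
    rw [Kex_Kex, Equiv.swap_apply_of_ne_of_ne hij.symm hkj.symm,
      Equiv.swap_apply_of_ne_of_ne hil.symm hkl.symm]
  linear_combination (X i - X k) * e2 - (X j - X l) * e1 - dd_spec j l p + dd_spec i k p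
    + dd_spec j l (Kex i k p) - dd_spec i k (Kex j l p) - hK

lemma dd_dd_comm_of_Kex_eq {k : Fin n} (hij : i ≠ j) (hik : i ≠ k) (hjk : j ≠ k)
    {p : R n} (hp : Kex i j p = p) : dd i k (dd j k p) = dd j k (dd i k p) := by
  refine mul_left_cancel₀ (mul_ne_zero (X_sub_X_ne_zero hjk)
    (mul_ne_zero (X_sub_X_ne_zero hik) (X_sub_X_ne_zero hij.symm))) ?_
  have e1 := dd_spec i k (dd j k p)
  have e2 := dd_spec j k (dd i k p)
  rw [Kex_dd _ _ hjk, Equiv.swap_apply_of_ne_of_ne hij.symm hjk, Equiv.swap_apply_right] at e1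
  rw [Kex_dd _ _ hik, Equiv.swap_apply_of_ne_of_ne hij hik, Equiv.swap_apply_right] at e2
  have F1 : Kex j i (Kex i k p) = Kex j k p := by
    rw [Kex_Kex, Equiv.swap_apply_right, Equiv.swap_apply_of_ne_of_ne hjk.symm hik.symm,
      Kex_comm i j, hp]
  have F2 : Kex i j (Kex j k p) = Kex i k p := by
    rw [Kex_Kex, Equiv.swap_apply_right, Equiv.swap_apply_of_ne_of_ne hik.symm hjk.symm, hp]
  have e5 := dd_spec j i (Kex i k p)
  have e6 := dd_spec i j (Kex j k p)
  rw [F1] at e5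
  rw [F2] at e6
  linear_combination ((X i - X k) * (X j - X i)) * e2 - ((X j - X k) * (X j - X i)) * e1
    - (X j - X i) * dd_spec j k p + (X j - X i) * dd_spec i k p + (X j - X k) * e5
    + (X i - X k) * e6

end DividedDifference

def euler (i : Fin n) (p : R n) : R n := X i * pderiv i p

def xdd (i j : Fin n) (p : R n) : R n := X i * dd i j p

lemma D_eq (i : Fin n) (p : R n) :
    D i p = C alpha * euler i p + ∑ j ∈ univ.erase i, xdd i j p := rfl

lemma xdd_add {i j : Fin n} (hij : i ≠ j) (p q : R n) :
    xdd i j (p + q) = xdd i j p + xdd i j q := by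
  rw [xdd, dd_add hij, mul_add, xdd, xdd]

lemma D_add (i : Fin n) (p q : R n) : D i (p + q) = D i p + D i q := by
  rw [D_eq, D_eq, D_eq, sum_congr rfl fun j hj => xdd_add (ne_of_mem_erase hj).symm p q,
    sum_add_distrib, euler, euler, euler, map_add]
  ring

lemma D_C_mul (i : Fin n) (c : FF) (p : R n) : D i (C c * p) = C c * D i p := by
  simp only [D_eq, euler, xdd, pderiv_C_mul, mul_add, mul_sum]
  refine congr_arg₂ _ (by ring) (sum_congr rfl fun j hj => ?_)
  rw [dd_C_mul (ne_of_mem_erase hj).symm]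
  ring

lemma D_sum (i : Fin n) {ι : Type*} (s : Finset ι) (f : ι → R n) :
    D i (∑ t ∈ s, f t) = ∑ t ∈ s, D i (f t) :=
  map_sum (AddMonoidHom.mk' (D i) (D_add i)) f s

lemma D_zsmul (i : Fin n) (m : ℤ) (p : R n) : D i (m • p) = m • D i p :=
  map_zsmul (AddMonoidHom.mk' (D i) (D_add i)) m p

lemma euler_zero (i : Fin n) : euler i (0 : R n) = 0 := by
  rw [euler, map_zero, mul_zero]

lemma xdd_zero {i j : Fin n} (hij : i ≠ j) : xdd i j (0 : R n) = 0 := by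
  rw [xdd, dd_zero hij, mul_zero]

lemma xdd_eq_zero_of_Kex_eq {i j : Fin n} (hij : i ≠ j) {p : R n} (hp : Kex i j p = p) :
    xdd i j p = 0 := by
  rw [xdd, dd_eq_zero_of_Kex_eq hij hp, mul_zero]

lemma euler_comm (i j : Fin n) (p : R n) : euler i (euler j p) = euler j (euler i p) := by
  rcases eq_or_ne i j with rfl | hij
  · rfl
  simp only [euler, Derivation.leibniz, pderiv_X_of_ne hij, pderiv_X_of_ne hij.symm, smul_eq_mul,
    mul_zero, add_zero, pderiv_pderiv_comm i j]
  ring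

lemma xdd_euler_comm {i k j : Fin n} (hik : i ≠ k) (hji : j ≠ i) (hjk : j ≠ k) (p : R n) :
    xdd i k (euler j p) = euler j (xdd i k p) := by
  simp only [xdd, euler, dd_mul_of_Kex_eq hik (Kex_X_of_ne hji hjk), Derivation.leibniz,
    pderiv_X_of_ne hji.symm, smul_eq_mul, mul_zero, add_zero, pderiv_dd hik hji hjk]
  ring

lemma xdd_xdd_comm {i k j l : Fin n} (hik : i ≠ k) (hjl : j ≠ l) (hij : i ≠ j) (hil : i ≠ l)
    (hkj : k ≠ j) (hkl : k ≠ l) (p : R n) : xdd i k (xdd j l p) = xdd j l (xdd i k p) := by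
  simp only [xdd, dd_mul_of_Kex_eq hik (Kex_X_of_ne hij.symm hkj.symm),
    dd_mul_of_Kex_eq hjl (Kex_X_of_ne hij hil), dd_dd_comm hik hjl hij hil hkj hkl]
  ring

lemma xdd_Kex_add {i j : Fin n} (hij : i ≠ j) (p : R n) :
    xdd i j (Kex i j p) + p = xdd j i p + Kex i j p := by
  rw [xdd, xdd, dd_Kex_self hij, dd_swap hij]
  linear_combination dd_spec i j p

lemma Kex_euler (a b i : Fin n) (p : R n) :
    Kex a b (euler i p) = euler (Equiv.swap a b i) (Kex a b p) := by
  simp only [euler, Kex, map_mul, rename_X, pderiv_rename (Equiv.injective _)]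

lemma Kex_xdd (a b : Fin n) {i j : Fin n} (hij : i ≠ j) (p : R n) :
    Kex a b (xdd i j p) = xdd (Equiv.swap a b i) (Equiv.swap a b j) (Kex a b p) := by
  rw [xdd, xdd, Kex_mul, Kex_dd _ _ hij, Kex, rename_X]

lemma xdd_triangle {i j k : Fin n} (hij : i ≠ j) (hik : i ≠ k) (hjk : j ≠ k) {p : R n}
    (hp : Kex i j p = p) :
    xdd i j (xdd j k p) + xdd i k (xdd j k p) + xdd i k p
      = xdd j i (xdd i k p) + xdd j k (xdd i k p) + xdd j k p := by
  have h1 := xdd_Kex_add hij (xdd i k p)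
  rw [Kex_xdd _ _ hik, hp, Equiv.swap_apply_left,
    Equiv.swap_apply_of_ne_of_ne hik.symm hjk.symm] at h1
  have h2 : xdd i k (xdd j k p) = xdd j k (xdd i k p) := by
    simp only [xdd, dd_mul_of_Kex_eq hik (Kex_X_of_ne hij.symm hjk),
      dd_mul_of_Kex_eq hjk (Kex_X_of_ne hij hik), dd_dd_comm_of_Kex_eq hij hik hjk hp]
    ring
  linear_combination h1 + h2

/-- The coefficients of `α` and of `1` in `D_i D_j p + D_i p`, see `D_D_add_eq`. -/
def DDcoeff₁ (i j : Fin n) (p : R n) : R n :=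
  euler i p + ∑ k ∈ univ.erase i, xdd i k (euler j p) + ∑ l ∈ univ.erase j, euler i (xdd j l p)

def DDcoeff₀ (i j : Fin n) (p : R n) : R n :=
  ∑ l ∈ univ.erase j, ∑ k ∈ univ.erase i, xdd i k (xdd j l p) + ∑ k ∈ univ.erase i, xdd i k p

lemma D_D_add_eq (i j : Fin n) (p : R n) :
    D i (D j p) + D i p
      = C alpha ^ 2 * euler i (euler j p) + C alpha * DDcoeff₁ i j p + DDcoeff₀ i j p := by
  rw [D_eq j p, D_add, D_C_mul, D_sum, D_eq i (euler j p), D_eq i p,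
    sum_congr rfl fun l _ => D_eq i (xdd j l p), sum_add_distrib, ← mul_sum, DDcoeff₁, DDcoeff₀]
  ring

section Commutation

variable {i j : Fin n}

lemma DDcoeff₁_eq (hij : i ≠ j) {p : R n} (hp : Kex i j p = p) :
    DDcoeff₁ i j p = euler i p + xdd i j (euler j p)
      + ∑ k ∈ (univ.erase i).erase j, (euler j (xdd i k p) + euler i (xdd j k p)) := by
  have hj : j ∈ univ.erase i := mem_erase_of_ne_of_mem hij.symm (mem_univ j)
  have hi : i ∈ univ.erase j := mem_erase_of_ne_of_mem hij (mem_univ i)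
  rw [DDcoeff₁, ← add_sum_erase _ _ hj, ← add_sum_erase _ _ hi, erase_right_comm (a := j) (b := i),
    xdd_eq_zero_of_Kex_eq hij.symm (by rwa [Kex_comm]), euler_zero, zero_add, sum_add_distrib,
    sum_congr rfl fun k hk => xdd_euler_comm (mem_univ_erase_erase.mp hk).2.symm hij.symm
      (mem_univ_erase_erase.mp hk).1.symm p]
  ring

lemma DDcoeff₁_comm (hij : i ≠ j) {p : R n} (hp : Kex i j p = p) :
    DDcoeff₁ i j p = DDcoeff₁ j i p := by
  have hp' : Kex j i p = p := by rwa [Kex_comm]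
  have key := xdd_Kex_add hij (euler i p)
  rw [Kex_euler, Equiv.swap_apply_left, hp] at key
  rw [DDcoeff₁_eq hij hp, DDcoeff₁_eq hij.symm hp', erase_right_comm (a := j) (b := i),
    sum_congr rfl fun k _ => add_comm (euler j (xdd i k p)) _]
  linear_combination key

lemma DDcoeff₀_eq (hij : i ≠ j) {p : R n} (hp : Kex i j p = p) :
    DDcoeff₀ i j p = ∑ l ∈ (univ.erase i).erase j,
        (xdd i j (xdd j l p) + xdd i l (xdd j l p) + xdd i l p)
      + ∑ l ∈ (univ.erase i).erase j, ∑ k ∈ ((univ.erase i).erase j).erase l,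
        xdd i k (xdd j l p) := by
  have hj : j ∈ univ.erase i := mem_erase_of_ne_of_mem hij.symm (mem_univ j)
  have hi : i ∈ univ.erase j := mem_erase_of_ne_of_mem hij (mem_univ i)
  have inner : ∀ l ∈ (univ.erase i).erase j, ∑ k ∈ univ.erase i, xdd i k (xdd j l p)
      = xdd i j (xdd j l p) + xdd i l (xdd j l p)
        + ∑ k ∈ ((univ.erase i).erase j).erase l, xdd i k (xdd j l p) := fun l hl => by
    rw [← add_sum_erase _ _ hj, ← add_sum_erase _ _ hl, add_assoc]
  rw [DDcoeff₀, ← add_sum_erase _ _ hi, erase_right_comm (a := j) (b := i), sum_congr rfl inner,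
    xdd_eq_zero_of_Kex_eq hij.symm (by rwa [Kex_comm]),
    sum_eq_zero fun k hk => xdd_zero (ne_of_mem_erase hk).symm, ← add_sum_erase _ _ hj,
    xdd_eq_zero_of_Kex_eq hij hp]
  simp only [sum_add_distrib]
  ring

lemma DDcoeff₀_comm (hij : i ≠ j) {p : R n} (hp : Kex i j p = p) :
    DDcoeff₀ i j p = DDcoeff₀ j i p := by
  have hp' : Kex j i p = p := by rwa [Kex_comm]
  rw [DDcoeff₀_eq hij hp, DDcoeff₀_eq hij.symm hp', erase_right_comm (a := j) (b := i)]
  refine congrArg₂ (· + ·) ?_ ?_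
  · exact sum_congr rfl fun l hl => xdd_triangle hij (mem_univ_erase_erase.mp hl).2.symm
      (mem_univ_erase_erase.mp hl).1.symm hp
  · rw [sum_comm' (t' := (univ.erase i).erase j) (s' := fun k => ((univ.erase i).erase j).erase k)
      (fun l k => by simp only [mem_erase]; tauto)]
    refine sum_congr rfl fun k hk => sum_congr rfl fun l hl => ?_
    obtain ⟨hkj, hki⟩ := mem_univ_erase_erase.mp hk
    obtain ⟨hlk, hlj, hli⟩ : l ≠ k ∧ l ≠ j ∧ l ≠ i := by
      simpa only [mem_erase, mem_univ, and_true] using hl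
    exact xdd_xdd_comm hki.symm hlj.symm hij hli.symm hkj hlk.symm p

theorem D_D_add_comm (hij : i ≠ j) {p : R n} (hp : Kex i j p = p) :
    D i (D j p) + D i p = D j (D i p) + D j p := by
  rw [D_D_add_eq, D_D_add_eq, euler_comm, DDcoeff₁_comm hij hp, DDcoeff₀_comm hij hp]

end Commutation

lemma Dm_Dm_comm {i j : Fin n} (hij : i ≠ j) {p : R n} (hp : Kex i j p = p) (m : ℤ) :
    Dm i m (Dm j (m + 1) p) = Dm j m (Dm i (m + 1) p) := by
  simp only [Dm, D_add, D_zsmul]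
  simp only [zsmul_eq_mul]
  push_cast
  linear_combination D_D_add_comm hij hp

lemma rename_D (σ : Equiv.Perm (Fin n)) (i : Fin n) (p : R n) :
    rename σ (D i p) = D (σ i) (rename σ p) := by
  rw [D_eq, D_eq, map_add, map_mul, rename_C, euler, euler, map_mul, rename_X,
    pderiv_rename σ.injective, map_sum]
  congr 1
  refine sum_equiv σ (by simp) fun j hj => ?_
  rw [xdd, xdd, map_mul, rename_X, rename_dd σ (ne_of_mem_erase hj).symm]

lemma rename_Dm (σ : Equiv.Perm (Fin n)) (i : Fin n) (m : ℤ) (p : R n) :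
    rename σ (Dm i m p) = Dm (σ i) m (rename σ p) := by
  rw [Dm, Dm, map_add, map_zsmul, rename_D]

lemma rename_DJl (σ : Equiv.Perm (Fin n)) (L : List (Fin n)) (m : ℤ) (p : R n) :
    rename σ (DJl L m p) = DJl (L.map σ) m (rename σ p) := by
  induction L generalizing m with
  | nil => rfl
  | cons a t ih => exact (rename_Dm σ a m _).trans (congrArg (Dm (σ a) m) (ih (m + 1)))

lemma Kex_DJl_of_notMem {i j : Fin n} {L : List (Fin n)} (hi : i ∉ L) (hj : j ∉ L) {p : R n}
    (hp : Kex i j p = p) (m : ℤ) : Kex i j (DJl L m p) = DJl L m p := by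
  rw [Kex, rename_DJl, List.map_congr_left fun k hk =>
      Equiv.swap_apply_of_ne_of_ne (ne_of_mem_of_not_mem hk hi) (ne_of_mem_of_not_mem hk hj),
    List.map_id']
  exact congrArg _ hp

lemma DJl_perm {L₁ L₂ : List (Fin n)} (h : L₁.Perm L₂) (hnd : L₁.Nodup) {p : R n}
    (hp : p.IsSymmetric) (m : ℤ) : DJl L₁ m p = DJl L₂ m p := by
  induction h generalizing m with
  | nil => rfl
  | cons x _ ih => exact congrArg (Dm x m) (ih (List.nodup_cons.mp hnd).2 (m + 1))
  | swap x y l =>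
    obtain ⟨hyxl, hxl, -⟩ := List.nodup_cons.mp hnd |>.imp_right List.nodup_cons.mp
    simp only [List.mem_cons, not_or] at hyxl
    exact Dm_Dm_comm hyxl.1 (Kex_DJl_of_notMem hyxl.2 hxl (hp _) _) m
  | trans h₁ _ ih₁ ih₂ => exact (ih₁ hnd m).trans (ih₂ (h₁.nodup_iff.mp hnd) m)

lemma rename_DJ (σ : Equiv.Perm (Fin n)) (J : Finset (Fin n)) {p : R n} (hp : p.IsSymmetric) :
    rename σ (DJ J p) = DJ (J.map σ.toEmbedding) p := by
  rw [DJ, DJ, rename_DJl, hp σ]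
  refine DJl_perm ?_ ((J.sort_nodup _).map σ.injective) hp 1
  rw [← Multiset.coe_eq_coe, ← Multiset.map_coe, sort_eq, sort_eq, map_val]
  rfl

lemma isSymmetric_Bop {p : R n} (hp : p.IsSymmetric) (i : ℕ) : (Bop i p).IsSymmetric := by
  intro σ
  rw [Bop, map_sum]
  refine sum_equiv σ.finsetCongr (by simp) fun J _ => ?_
  rw [map_mul, map_prod, rename_DJ σ J hp, Equiv.finsetCongr_apply, prod_map]
  simp only [rename_X, Equiv.coe_toEmbedding]

section Homogeneous

variable {p : R n} {d : ℕ}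

lemma euler_isHomogeneous (hp : p.IsHomogeneous d) (i : Fin n) :
    (euler i p).IsHomogeneous d := by
  rcases Nat.eq_zero_or_pos d with rfl | hd
  · rw [hp.eq_C_of_zero, euler, pderiv_C, mul_zero]
    exact isHomogeneous_zero _ _ _
  · simpa [euler, Nat.add_sub_cancel' hd] using (isHomogeneous_X FF i).mul hp.pderiv

lemma xdd_isHomogeneous (hp : p.IsHomogeneous d) {i j : Fin n} (hij : i ≠ j) :
    (xdd i j p).IsHomogeneous d := by
  rcases Nat.eq_zero_or_pos d with rfl | hd
  · rw [xdd, dd_eq_zero_of_Kex_eq hij (by rw [hp.eq_C_of_zero, Kex, rename_C]), mul_zero]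
    exact isHomogeneous_zero _ _ _
  · have hsub : ((X i - X j) * dd i j p).IsHomogeneous (1 + (d - 1)) := by
      rw [← dd_spec, Nat.add_sub_cancel' hd]
      exact hp.sub hp.rename_isHomogeneous
    have := (isHomogeneous_X FF i).mul
      (((isHomogeneous_X FF i).sub (isHomogeneous_X FF j)).of_mul_left (X_sub_X_ne_zero hij) hsub)
    rwa [Nat.add_sub_cancel' hd] at this

lemma D_isHomogeneous (hp : p.IsHomogeneous d) (i : Fin n) : (D i p).IsHomogeneous d :=
  ((euler_isHomogeneous hp i).C_mul _).add
    (IsHomogeneous.sum _ _ _ fun _ hj => xdd_isHomogeneous hp (ne_of_mem_erase hj).symm)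

lemma DJl_isHomogeneous (hp : p.IsHomogeneous d) (L : List (Fin n)) (m : ℤ) :
    (DJl L m p).IsHomogeneous d := by
  induction L generalizing m with
  | nil => exact hp
  | cons a t ih =>
    exact (D_isHomogeneous (ih (m + 1)) a).add
      (by simpa [zsmul_eq_mul] using (ih (m + 1)).C_mul (m : FF))

lemma Bop_isHomogeneous (hp : p.IsHomogeneous d) (i : ℕ) : (Bop i p).IsHomogeneous (d + i) := by
  refine IsHomogeneous.sum _ _ _ fun J hJ => ?_
  have hprod := IsHomogeneous.prod J (fun k => (X k : R n)) (fun _ => 1)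
    fun k _ => isHomogeneous_X _ k
  rw [sum_const, smul_eq_mul, mul_one, mem_powersetCard_univ.mp hJ] at hprod
  rw [add_comm]
  exact hprod.mul (DJl_isHomogeneous hp _ 1)

lemma Bop_iterate_isHomogeneous (hp : p.IsHomogeneous d) (i m : ℕ) :
    ((Bop i)^[m] p).IsHomogeneous (d + i * m) := by
  induction m with
  | zero => simpa using hp
  | succ m ih =>
    rw [Function.iterate_succ_apply', Nat.mul_succ, ← add_assoc]
    exact Bop_isHomogeneous ih i

end Homogeneous

lemma rodA_isHomogeneous (lam : ℕ → ℕ) (i : ℕ) :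
    (rodA (n := n) lam i).IsHomogeneous
      (∑ t ∈ range i, (t + 1) * (lam (t + 1) - lam (t + 2))) := by
  induction i with
  | zero => exact isHomogeneous_one _ _
  | succ i ih =>
    rw [sum_range_succ]
    exact Bop_iterate_isHomogeneous ih (i + 1) _

lemma rodA_isSymmetric (lam : ℕ → ℕ) (i : ℕ) : (rodA (n := n) lam i).IsSymmetric := by
  induction i with
  | zero => exact fun _ => map_one _
  | succ i ih =>
    rw [rodA]
    exact Function.Iterate.rec _ ih (fun _ hq => isSymmetric_Bop hq _) _

end

/-- `(B_n^+)^{λ_n} ⋯ (B_1^+)^{λ_1-λ_2} · 1` is symmetric and homogeneous of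
degree `|λ|` (here `lam k` is the part `λ_k`, 1-indexed). -/
theorem rod_symmetric_homogeneous (n : ℕ) (lam : ℕ → ℕ)
    (hdec : ∀ i, lam (i + 2) ≤ lam (i + 1)) (hlen : ∀ i, n < i → lam i = 0) :
    (rod (n := n) lam).IsSymmetric ∧
    (rod (n := n) lam).IsHomogeneous (∑ i ∈ Finset.range n, lam (i + 1)) := by
  refine ⟨rodA_isSymmetric lam n, ?_⟩
  have hdeg := Nat.sum_range_succ_mul_sub_add (f := fun k => lam (k + 1)) hdec n
  rw [hlen (n + 1) n.lt_succ_self, mul_zero, add_zero] at hdeg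
  rw [← hdeg]
  exact rodA_isHomogeneous lam n
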